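/- arXiv:2503.00700 — 2 statements merged into one kernel-verified Lean document; each statement's English description precedes it below -/
import Mathlib

section
/- Let g : (0,∞) → [0,∞) be measurable, T > 0, j ∈ ℤ, and suppose ∫_0^t g(s)² ds ≤ A² min(2^{2j} t, 1) for all t ∈ (0,T]. Then for every α ∈ [0, 1/2), ∫_0^T t^{−2α} g(t)² dt ≤ C_α 2^{4αj} A², where C_α depends only on α. -/
open MeasureTheory

/-- Weighted bound on a piece: if `a ≤ t` on `S` and `∫_S g² ≤ M`, then
`∫_S t^{-2α} g² ≤ a^{-2α} M`. -/
lemma tw_piece (α : ℝ) (hα0 : 0 ≤ α) (g : ℝ → ℝ) (a : ℝ) (ha : 0 < a) (S : Set ℝ)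
    (hSm : MeasurableSet S) (hS : ∀ t ∈ S, a ≤ t) (M : ℝ)
    (hint : (∫⁻ t in S, ENNReal.ofReal (g t ^ 2)) ≤ ENNReal.ofReal M) :
    (∫⁻ t in S, ENNReal.ofReal (t ^ (-(2 * α)) * g t ^ 2)) ≤
      ENNReal.ofReal (a ^ (-(2 * α)) * M) := by
  have ha' : 0 ≤ a ^ (-(2 * α)) := Real.rpow_nonneg ha.le _
  calc (∫⁻ t in S, ENNReal.ofReal (t ^ (-(2 * α)) * g t ^ 2))
      ≤ ∫⁻ t in S, ENNReal.ofReal (a ^ (-(2 * α))) * ENNReal.ofReal (g t ^ 2) := by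
        refine setLIntegral_mono' hSm fun t ht => ?_
        rw [← ENNReal.ofReal_mul ha']
        refine ENNReal.ofReal_le_ofReal ?_
        have htpos : 0 < t := lt_of_lt_of_le ha (hS t ht)
        have : t ^ (-(2 * α)) ≤ a ^ (-(2 * α)) :=
          Real.rpow_le_rpow_of_nonpos ha (hS t ht) (by linarith)
        exact mul_le_mul_of_nonneg_right this (sq_nonneg _)
    _ = ENNReal.ofReal (a ^ (-(2 * α))) * ∫⁻ t in S, ENNReal.ofReal (g t ^ 2) :=
        lintegral_const_mul' _ _ ENNReal.ofReal_ne_top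
    _ ≤ ENNReal.ofReal (a ^ (-(2 * α))) * ENNReal.ofReal M :=
        mul_le_mul_right hint _
    _ = ENNReal.ofReal (a ^ (-(2 * α)) * M) := (ENNReal.ofReal_mul ha').symm

/-- Time-weight lemma: if `∫_0^t g² ≤ A² min(2^{2j} t, 1)` for all `t ∈ (0,T]`, then for
`α ∈ [0, 1/2)` one has `∫_0^T t^{−2α} g(t)² dt ≤ C_α 2^{4αj} A²` with `C_α` depending
only on `α`. -/
theorem time_weight_lemma (α : ℝ) (hα0 : 0 ≤ α) (hα : α < 1 / 2) :
    ∃ C : ℝ, 0 < C ∧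
      ∀ (g : ℝ → ℝ) (T : ℝ) (j : ℤ) (A : ℝ),
        Measurable g → (∀ t, 0 ≤ g t) → 0 < T → 0 ≤ A →
        (∀ t ∈ Set.Ioc (0 : ℝ) T,
          (∫⁻ s in Set.Ioc (0 : ℝ) t, ENNReal.ofReal (g s ^ 2)) ≤
            ENNReal.ofReal (A ^ 2 * min ((2 : ℝ) ^ (2 * (j : ℝ)) * t) 1)) →
        (∫⁻ t in Set.Ioc (0 : ℝ) T, ENNReal.ofReal (t ^ (-(2 * α)) * g t ^ 2)) ≤
          ENNReal.ofReal (C * (2 : ℝ) ^ (4 * α * (j : ℝ)) * A ^ 2) := by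
  set r : ℝ := (2 : ℝ) ^ (2 * α - 1) with hr_def
  have hr0 : 0 < r := Real.rpow_pos_of_pos two_pos _
  have hr1 : r < 1 := Real.rpow_lt_one_of_one_lt_of_neg one_lt_two (by linarith)
  have h1r : 0 < 1 - r := by linarith
  have h2a : (0:ℝ) < (2:ℝ) ^ (2*α) := Real.rpow_pos_of_pos two_pos _
  refine ⟨1 + (2:ℝ) ^ (2*α) * (1 - r)⁻¹, by positivity, ?_⟩
  intro g T j A hg hg0 hT hA hI
  set t₀ : ℝ := (2 : ℝ) ^ (-(2 * (j : ℝ))) with ht₀_def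
  have ht₀ : 0 < t₀ := Real.rpow_pos_of_pos two_pos _
  have hkey : (2 : ℝ) ^ (2 * (j : ℝ)) * t₀ = 1 := by
    rw [ht₀_def, ← Real.rpow_add two_pos]; simp
  -- the covering sets
  set s : ℕ → Set ℝ := fun n =>
    match n with
    | 0 => Set.Ioc t₀ T
    | m + 1 => Set.Ioc (t₀ / 2 ^ (m + 1)) (t₀ / 2 ^ m) ∩ Set.Ioc 0 T with hs_def
  have hsm : ∀ n, MeasurableSet (s n) := by
    rintro (_ | m)
    · exact measurableSet_Ioc
    · exact measurableSet_Ioc.inter measurableSet_Ioc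
  have hcover : Set.Ioc (0 : ℝ) T ⊆ ⋃ n, s n := by
    rintro t ⟨ht0, htT⟩
    by_cases h : t₀ < t
    · exact Set.mem_iUnion.2 ⟨0, h, htT⟩
    · push_neg at h
      have hex : ∃ n : ℕ, t₀ / 2 ^ n < t := by
        obtain ⟨n, hn⟩ := exists_pow_lt_of_lt_one (x := t / t₀) (y := (1:ℝ)/2)
          (by positivity) (by norm_num)
        refine ⟨n, ?_⟩
        have : t₀ * (1/2) ^ n < t₀ * (t / t₀) := by
          exact mul_lt_mul_of_pos_left hn ht₀
        rw [mul_div_cancel₀ _ ht₀.ne'] at this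
        calc t₀ / 2 ^ n = t₀ * (1/2) ^ n := by rw [div_pow]; ring
          _ < t := this
      classical
      have hn : t₀ / 2 ^ (Nat.find hex) < t := Nat.find_spec hex
      have hnpos : Nat.find hex ≠ 0 := by
        intro h0
        rw [h0] at hn; simp at hn; linarith
      obtain ⟨m, hmeq⟩ := Nat.exists_eq_succ_of_ne_zero hnpos
      have hm : ¬ (t₀ / 2 ^ m < t) := Nat.find_min hex (by omega)
      push_neg at hm
      rw [hmeq] at hn
      exact Set.mem_iUnion.2 ⟨m + 1, ⟨hn, hm⟩, ht0, htT⟩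
  -- geometric bound sequence
  set q : ℕ → ℝ := fun n =>
    match n with
    | 0 => 1
    | m + 1 => (2:ℝ) ^ (2*α) * r ^ m with hq_def
  have hq_nonneg : ∀ n, 0 ≤ q n := by
    rintro (_ | m)
    · norm_num [hq_def]
    · have : (0:ℝ) ≤ (2:ℝ) ^ (2*α) * r ^ m := by positivity
      simpa [hq_def] using this
  have hq_summable : Summable q := by
    rw [← summable_nat_add_iff 1]
    exact ((summable_geometric_of_lt_one hr0.le hr1).mul_left _)
  have hq_tsum : ∑' n, q n = 1 + (2:ℝ) ^ (2*α) * (1 - r)⁻¹ := by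
    rw [Summable.tsum_eq_zero_add hq_summable]
    have : ∑' m : ℕ, q (m + 1) = (2:ℝ) ^ (2*α) * (1 - r)⁻¹ := by
      simp only [hq_def]
      rw [tsum_mul_left, tsum_geometric_of_lt_one hr0.le hr1]
    rw [this]
  set D : ℝ := t₀ ^ (-(2 * α)) * A ^ 2 with hD_def
  have hD0 : 0 ≤ D := by
    have := Real.rpow_nonneg ht₀.le (-(2*α)); positivity
  -- the key piece estimates
  have hpiece : ∀ n, (∫⁻ t in s n, ENNReal.ofReal (t ^ (-(2 * α)) * g t ^ 2)) ≤
      ENNReal.ofReal (D * q n) := by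
    rintro (_ | m)
    · -- piece 0 : Ioc t₀ T
      have hint : (∫⁻ t in s 0, ENNReal.ofReal (g t ^ 2)) ≤ ENNReal.ofReal (A ^ 2) := by
        have hsub : s 0 ⊆ Set.Ioc (0:ℝ) T := fun x hx => ⟨lt_trans ht₀ hx.1, hx.2⟩
        refine le_trans (lintegral_mono_set hsub) ?_
        refine le_trans (hI T ⟨hT, le_refl _⟩) ?_
        refine ENNReal.ofReal_le_ofReal ?_
        have : min ((2 : ℝ) ^ (2 * (j : ℝ)) * T) 1 ≤ 1 := min_le_right _ _
        nlinarith [sq_nonneg A]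
      have := tw_piece α hα0 g t₀ ht₀ (s 0) (hsm 0) (fun t ht => le_of_lt ht.1) (A^2) hint
      refine le_trans this (le_of_eq ?_)
      congr 1
      simp [hD_def, hq_def]
    · -- piece m+1
      set a : ℝ := t₀ / 2 ^ (m + 1) with ha_def
      have ha : 0 < a := by positivity
      set b : ℝ := min (t₀ / 2 ^ m) T with hb_def
      have hb0 : 0 < b := lt_min (by positivity) hT
      have hbT : b ≤ T := min_le_right _ _
      have hint : (∫⁻ t in s (m+1), ENNReal.ofReal (g t ^ 2)) ≤
          ENNReal.ofReal (A ^ 2 * (1/2) ^ m) := by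
        have hsub : s (m+1) ⊆ Set.Ioc (0:ℝ) b := by
          rintro x ⟨⟨hx1, hx2⟩, hx3, hx4⟩
          exact ⟨hx3, le_min hx2 hx4⟩
        refine le_trans (lintegral_mono_set hsub) ?_
        refine le_trans (hI b ⟨hb0, hbT⟩) ?_
        refine ENNReal.ofReal_le_ofReal ?_
        have h1 : min ((2 : ℝ) ^ (2 * (j : ℝ)) * b) 1 ≤ (2 : ℝ) ^ (2 * (j : ℝ)) * b :=
          min_le_left _ _
        have h2 : (2 : ℝ) ^ (2 * (j : ℝ)) * b ≤ (2 : ℝ) ^ (2 * (j : ℝ)) * (t₀ / 2 ^ m) :=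
          mul_le_mul_of_nonneg_left (min_le_left _ _)
            (Real.rpow_nonneg (by norm_num) _)
        have h3 : (2 : ℝ) ^ (2 * (j : ℝ)) * (t₀ / 2 ^ m) = (1/2) ^ m := by
          rw [div_pow, one_pow, ← mul_div_assoc, hkey]
        nlinarith [sq_nonneg A, mul_le_mul_of_nonneg_left (le_trans h1 (h2.trans_eq h3)) (sq_nonneg A)]
      have hbd := tw_piece α hα0 g a ha (s (m+1)) (hsm (m+1))
        (fun t ht => le_of_lt ht.1.1) (A ^ 2 * (1/2) ^ m) hint
      refine le_trans hbd (ENNReal.ofReal_le_ofReal (le_of_eq ?_))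
      -- a^{-2α} * (A² (1/2)^m) = D * (2^{2α} r^m)
      have hexp : a ^ (-(2 * α)) = t₀ ^ (-(2 * α)) * (2:ℝ) ^ (2*α) * ((2:ℝ) ^ (2*α)) ^ m := by
        rw [ha_def, Real.div_rpow ht₀.le (by positivity)]
        have h2m : ((2:ℝ) ^ (m+1)) ^ (-(2 * α)) = (((2:ℝ) ^ (2*α)) ^ (m+1))⁻¹ := by
          rw [← Real.rpow_natCast (2:ℝ) (m+1), ← Real.rpow_natCast ((2:ℝ) ^ (2*α)) (m+1),
            ← Real.rpow_mul (by norm_num), ← Real.rpow_mul (by norm_num),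
            ← Real.rpow_neg (by norm_num)]
          ring_nf
        rw [h2m, div_eq_mul_inv, inv_inv, pow_succ]
        ring
      have hrm : ((2:ℝ) ^ (2*α)) ^ m * (1/2) ^ m = r ^ m := by
        rw [hr_def, ← mul_pow]
        congr 1
        rw [Real.rpow_sub two_pos, Real.rpow_one]
        ring
      simp only [hq_def, hD_def]
      rw [hexp]
      calc t₀ ^ (-(2 * α)) * (2:ℝ) ^ (2*α) * ((2:ℝ) ^ (2*α)) ^ m * (A ^ 2 * (1/2) ^ m)
          = t₀ ^ (-(2 * α)) * A ^ 2 * ((2:ℝ) ^ (2*α) * (((2:ℝ) ^ (2*α)) ^ m * (1/2) ^ m)) := by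
            ring
        _ = t₀ ^ (-(2 * α)) * A ^ 2 * ((2:ℝ) ^ (2*α) * r ^ m) := by rw [hrm]
  -- sum up
  calc (∫⁻ t in Set.Ioc (0 : ℝ) T, ENNReal.ofReal (t ^ (-(2 * α)) * g t ^ 2))
      ≤ ∫⁻ t in ⋃ n, s n, ENNReal.ofReal (t ^ (-(2 * α)) * g t ^ 2) :=
        lintegral_mono_set hcover
    _ ≤ ∑' n, ∫⁻ t in s n, ENNReal.ofReal (t ^ (-(2 * α)) * g t ^ 2) :=
        lintegral_iUnion_le _ _
    _ ≤ ∑' n, ENNReal.ofReal (D * q n) := ENNReal.tsum_le_tsum hpiece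
    _ = ENNReal.ofReal (∑' n, D * q n) := by
        rw [ENNReal.ofReal_tsum_of_nonneg (fun n => mul_nonneg hD0 (hq_nonneg n))
          (hq_summable.mul_left D)]
    _ = ENNReal.ofReal (D * (1 + (2:ℝ) ^ (2*α) * (1 - r)⁻¹)) := by
        rw [tsum_mul_left, hq_tsum]
    _ ≤ ENNReal.ofReal ((1 + (2:ℝ) ^ (2*α) * (1 - r)⁻¹) *
          (2 : ℝ) ^ (4 * α * (j : ℝ)) * A ^ 2) := by
        refine ENNReal.ofReal_le_ofReal (le_of_eq ?_)
        have ht₀exp : t₀ ^ (-(2 * α)) = (2 : ℝ) ^ (4 * α * (j : ℝ)) := by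
          rw [ht₀_def, ← Real.rpow_mul (by norm_num)]
          congr 1
          ring
        rw [hD_def, ht₀exp]
        ring
end

section
/- O'Neil's inequality in Lorentz spaces: if 1/p = 1/p₁ + 1/p₂ and 1/q = 1/q₁ + 1/q₂ with 1 ≤ p, p₁, p₂, q, q₁, q₂ ≤ ∞, then for f ∈ L^{p₁,q₁} and g ∈ L^{p₂,q₂} on a σ-finite measure space, the product fg lies in L^{p,q} with ‖fg‖_{L^{p,q}} ≤ C ‖f‖_{L^{p₁,q₁}} ‖g‖_{L^{p₂,q₂}}. -/
/-!
Since `μ{|fg| > ab} ≤ μ{|f| > a} + μ{|g| > b}`, the rearrangements satisfy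
`(fg)*(t) ≤ f*(t/2) g*(t/2)`, hence
`t^{1/p} (fg)*(t) ≤ 2^{1/p} · (t/2)^{1/p₁} f*(t/2) · (t/2)^{1/p₂} g*(t/2)`.
The norm of `L^q((0, ∞), dt/t)` is invariant under `t ↦ t/2`, so Hölder's inequality in that
space, with `1/q = 1/q₁ + 1/q₂`, gives the claim with `C = 2^{1/p}`.
-/

open MeasureTheory
open scoped ENNReal

/-- Distribution function `s ↦ μ{|f| > s}`. -/
noncomputable def distFn {α : Type*} [MeasurableSpace α] (μ : Measure α) (f : α → ℝ)
    (s : ℝ≥0∞) : ℝ≥0∞ :=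
  μ {x | s < ENNReal.ofReal |f x|}

/-- Decreasing rearrangement `f*(t) = inf {s ≥ 0 : μ{|f| > s} ≤ t}`. -/
noncomputable def decRearr {α : Type*} [MeasurableSpace α] (μ : Measure α) (f : α → ℝ)
    (t : ℝ) : ℝ≥0∞ :=
  sInf {s : ℝ≥0∞ | distFn μ f s ≤ ENNReal.ofReal t}

/-- Lorentz quasinorm `‖f‖_{L^{p,q}} = (∫_0^∞ (t^{1/p} f*(t))^q dt/t)^{1/q}`
(with the supremum when `q = ∞`). -/
noncomputable def lorentzNorm {α : Type*} [MeasurableSpace α] (μ : Measure α) (f : α → ℝ)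
    (p q : ℝ≥0∞) : ℝ≥0∞ :=
  if q = ∞ then ⨆ t ∈ Set.Ioi (0 : ℝ), ENNReal.ofReal (t ^ p.toReal⁻¹) * decRearr μ f t
  else (∫⁻ t in Set.Ioi (0 : ℝ),
      (ENNReal.ofReal (t ^ p.toReal⁻¹) * decRearr μ f t) ^ q.toReal /
        ENNReal.ofReal t) ^ q.toReal⁻¹

open Set

section Rearrangement

variable {α : Type*} [MeasurableSpace α] (μ : Measure α) (f g : α → ℝ)

theorem decRearr_antitone : Antitone (decRearr μ f) := fun _ _ h =>
  sInf_le_sInf fun _ hs => hs.trans (ENNReal.ofReal_le_ofReal h)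

@[fun_prop]
theorem measurable_decRearr : Measurable (decRearr μ f) :=
  (decRearr_antitone μ f).measurable

/-- The infimum defining `f*(t)` is attained, by continuity from below of `μ`. -/
theorem distFn_decRearr_le (t : ℝ) : distFn μ f (decRearr μ f t) ≤ ENNReal.ofReal t := by
  set S := {s : ℝ≥0∞ | distFn μ f s ≤ ENNReal.ofReal t}
  have hS : S.Nonempty := ⟨∞, by simp [S, distFn]⟩
  obtain ⟨u, hu_anti, hu_lim, hu_mem⟩ := exists_seq_tendsto_sInf hS (OrderBot.bddBelow S)
  have hcover : {x | sInf S < ENNReal.ofReal |f x|} ⊆ ⋃ n, {x | u n < ENNReal.ofReal |f x|} := by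
    intro x hx
    obtain ⟨n, hn⟩ := (hu_lim.eventually (gt_mem_nhds hx)).exists
    exact mem_iUnion.2 ⟨n, hn⟩
  have hmono : Monotone fun n => {x | u n < ENNReal.ofReal |f x|} :=
    fun m n hmn x hx => (hu_anti hmn).trans_lt hx
  calc distFn μ f (sInf S) ≤ μ (⋃ n, {x | u n < ENNReal.ofReal |f x|}) := measure_mono hcover
    _ = ⨆ n, distFn μ f (u n) := hmono.measure_iUnion
    _ ≤ ENNReal.ofReal t := iSup_le hu_mem

theorem decRearr_mul_le {t₁ t₂ : ℝ} (ht₁ : 0 ≤ t₁) (ht₂ : 0 ≤ t₂) :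
    decRearr μ (fun x => f x * g x) (t₁ + t₂) ≤ decRearr μ f t₁ * decRearr μ g t₂ := by
  set a := decRearr μ f t₁
  set b := decRearr μ g t₂
  have hcover : {x | a * b < ENNReal.ofReal |f x * g x|} ⊆
      {x | a < ENNReal.ofReal |f x|} ∪ {x | b < ENNReal.ofReal |g x|} := by
    intro x hx
    contrapose! hx
    simp only [mem_union, mem_ofPred_eq, not_or, not_lt] at hx ⊢
    rw [abs_mul, ENNReal.ofReal_mul (abs_nonneg _)]
    exact mul_le_mul' hx.1 hx.2
  refine sInf_le ?_
  calc distFn μ (fun x => f x * g x) (a * b)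
      ≤ distFn μ f a + distFn μ g b := (measure_mono hcover).trans (measure_union_le _ _)
    _ ≤ ENNReal.ofReal t₁ + ENNReal.ofReal t₂ :=
      add_le_add (distFn_decRearr_le μ f t₁) (distFn_decRearr_le μ g t₂)
    _ = ENNReal.ofReal (t₁ + t₂) := (ENNReal.ofReal_add ht₁ ht₂).symm

end Rearrangement

theorem ENNReal.ne_zero_of_one_div_eq_add {a b c : ℝ≥0∞} (hb : b ≠ 0) (hc : c ≠ 0)
    (h : 1 / a = 1 / b + 1 / c) : a ≠ 0 := by
  rintro rfl
  simp only [one_div, ENNReal.inv_zero] at h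
  rcases ENNReal.add_eq_top.1 h.symm with h | h <;> simp_all

theorem ENNReal.toReal_inv_eq_add {a b c : ℝ≥0∞} (hb : b ≠ 0) (hc : c ≠ 0)
    (h : 1 / a = 1 / b + 1 / c) : a.toReal⁻¹ = b.toReal⁻¹ + c.toReal⁻¹ := by
  have h' := congrArg ENNReal.toReal h
  rw [ENNReal.toReal_add (by simpa) (by simpa)] at h'
  simpa [ENNReal.toReal_inv] using h'

theorem setLIntegral_Ioi_comp_div (K : ℝ → ℝ≥0∞) {c : ℝ} (hc : 0 < c) :
    ∫⁻ t in Ioi 0, K (t / c) = ENNReal.ofReal c * ∫⁻ t in Ioi 0, K t := by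
  have hemb : MeasurableEmbedding fun t : ℝ => c⁻¹ * t :=
    (Homeomorph.mulLeft₀ c⁻¹ (inv_ne_zero hc.ne')).measurableEmbedding
  have hpre : (fun t : ℝ => c⁻¹ * t) ⁻¹' Ioi 0 = Ioi 0 := by
    ext t; simp [hc]
  calc ∫⁻ t in Ioi 0, K (t / c) = ∫⁻ t in Ioi 0, K (c⁻¹ * t) := by simp_rw [div_eq_inv_mul]
    _ = ∫⁻ t, K t ∂(volume.map (c⁻¹ * ·)).restrict (Ioi 0) := by
      rw [hemb.restrict_map, hpre, hemb.lintegral_map]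
    _ = ENNReal.ofReal c * ∫⁻ t in Ioi 0, K t := by
      rw [Real.map_volume_mul_left (inv_ne_zero hc.ne'), Measure.restrict_smul,
        lintegral_smul_measure, inv_inv, abs_of_pos hc, smul_eq_mul]

/-- The norm of `L^q((0, ∞), dt/t)`, except that `q = ∞` takes the pointwise supremum rather than
the essential one: `lorentzNorm μ f p q` is this norm of `t ↦ t^{1/p} f*(t)`. -/
noncomputable def haarNorm (F : ℝ → ℝ≥0∞) (q : ℝ≥0∞) : ℝ≥0∞ :=
  if q = ∞ then ⨆ t ∈ Ioi (0 : ℝ), F t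
  else (∫⁻ t in Ioi (0 : ℝ), F t ^ q.toReal / ENNReal.ofReal t) ^ q.toReal⁻¹

theorem lorentzNorm_eq_haarNorm {α : Type*} [MeasurableSpace α] (μ : Measure α) (f : α → ℝ)
    (p q : ℝ≥0∞) :
    lorentzNorm μ f p q = haarNorm (fun t => ENNReal.ofReal (t ^ p.toReal⁻¹) * decRearr μ f t) q :=
  rfl

section HaarNorm

variable {F F₁ F₂ : ℝ → ℝ≥0∞} {q q₁ q₂ : ℝ≥0∞}

theorem haarNorm_top (F : ℝ → ℝ≥0∞) : haarNorm F ∞ = ⨆ t ∈ Ioi (0 : ℝ), F t := if_pos rfl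

theorem haarNorm_of_ne_top (hq : q ≠ ∞) :
    haarNorm F q = (∫⁻ t in Ioi (0 : ℝ), F t ^ q.toReal / ENNReal.ofReal t) ^ q.toReal⁻¹ :=
  if_neg hq

theorem haarNorm_mono (h : ∀ t ∈ Ioi (0 : ℝ), F₁ t ≤ F₂ t) (q : ℝ≥0∞) :
    haarNorm F₁ q ≤ haarNorm F₂ q := by
  rcases eq_or_ne q ∞ with rfl | hq
  · simp only [haarNorm_top]
    exact iSup₂_mono h
  · simp only [haarNorm_of_ne_top hq]
    refine ENNReal.rpow_le_rpow (setLIntegral_mono' measurableSet_Ioi fun t ht => ?_) (by positivity)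
    gcongr
    exact h t ht

theorem haarNorm_const_mul (c : ℝ≥0∞) (hF : Measurable F) (hq : q ≠ 0) :
    haarNorm (fun t => c * F t) q = c * haarNorm F q := by
  rcases eq_or_ne q ∞ with rfl | hq_top
  · simp only [haarNorm_top, ENNReal.mul_iSup]
  have hr : 0 < q.toReal := ENNReal.toReal_pos hq hq_top
  simp only [haarNorm_of_ne_top hq_top, ENNReal.mul_rpow_of_nonneg _ _ hr.le, mul_div_assoc]
  rw [lintegral_const_mul _ (by fun_prop), ENNReal.mul_rpow_of_nonneg _ _ (by positivity),
    ← ENNReal.rpow_mul, mul_inv_cancel₀ hr.ne', ENNReal.rpow_one]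

theorem haarNorm_comp_div (F : ℝ → ℝ≥0∞) {c : ℝ} (hc : 0 < c) (q : ℝ≥0∞) :
    haarNorm (fun t => F (t / c)) q = haarNorm F q := by
  rcases eq_or_ne q ∞ with rfl | hq
  · simp only [haarNorm_top]
    refine le_antisymm (iSup₂_le fun t ht => le_iSup₂_of_le (t / c) (div_pos ht hc) le_rfl)
      (iSup₂_le fun t ht => le_iSup₂_of_le (t * c) (mul_pos ht hc) ?_)
    rw [mul_div_cancel_right₀ t hc.ne']
  · have hscale : ∀ t, F (t / c) ^ q.toReal / ENNReal.ofReal t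
        = ENNReal.ofReal c⁻¹ * (F (t / c) ^ q.toReal / ENNReal.ofReal (t / c)) := by
      intro t
      have hc' : ENNReal.ofReal c ≠ 0 := by simpa using hc
      rw [ENNReal.ofReal_inv_of_pos hc, ← mul_div_cancel₀ t hc.ne', ENNReal.ofReal_mul hc.le,
        mul_div_cancel_left₀ _ hc.ne', ENNReal.div_eq_inv_mul, ENNReal.div_eq_inv_mul,
        ENNReal.mul_inv (.inl hc') (.inl ENNReal.ofReal_ne_top), mul_assoc]
    simp only [haarNorm_of_ne_top hq, hscale]
    rw [lintegral_const_mul' _ _ ENNReal.ofReal_ne_top,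
      setLIntegral_Ioi_comp_div (fun t => F t ^ q.toReal / ENNReal.ofReal t) hc, ← mul_assoc,
      ← ENNReal.ofReal_mul (inv_nonneg.2 hc.le), inv_mul_cancel₀ hc.ne', ENNReal.ofReal_one,
      one_mul]

theorem haarNorm_mul_le_iSup_mul (hF₂ : Measurable F₂) (hq : q ≠ 0) :
    haarNorm (fun t => F₁ t * F₂ t) q ≤ (⨆ t ∈ Ioi (0 : ℝ), F₁ t) * haarNorm F₂ q := by
  rw [← haarNorm_const_mul _ hF₂ hq]
  exact haarNorm_mono (fun t ht => mul_le_mul_left (le_iSup₂ (f := fun t _ => F₁ t) t ht) _) q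

theorem haarNorm_mul_le_of_ne_top (hF₁ : Measurable F₁) (hF₂ : Measurable F₂)
    (hq₁ : q₁ ≠ 0) (hq₂ : q₂ ≠ 0) (hq₁_top : q₁ ≠ ∞) (hq₂_top : q₂ ≠ ∞)
    (hq : 1 / q = 1 / q₁ + 1 / q₂) :
    haarNorm (fun t => F₁ t * F₂ t) q ≤ haarNorm F₁ q₁ * haarNorm F₂ q₂ := by
  have hq_top : q ≠ ∞ := by
    rintro rfl
    rw [one_div, ENNReal.inv_top, eq_comm, add_eq_zero, one_div] at hq
    exact hq₁_top (ENNReal.inv_eq_zero.1 hq.1)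
  have hr₂ : 0 < q₂.toReal := ENNReal.toReal_pos hq₂ hq₂_top
  have hr : 0 < q.toReal :=
    ENNReal.toReal_pos (ENNReal.ne_zero_of_one_div_eq_add hq₁ hq₂ hq) hq_top
  have hsum := ENNReal.toReal_inv_eq_add hq₁ hq₂ hq
  have hr_lt : q.toReal < q₁.toReal := by
    rw [← inv_lt_inv₀ (ENNReal.toReal_pos hq₁ hq₁_top) hr, hsum]
    exact lt_add_of_pos_right _ (inv_pos.2 hr₂)
  set ν := (volume.restrict (Ioi (0 : ℝ))).withDensity fun t => (ENNReal.ofReal t)⁻¹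
  have hν (G : ℝ → ℝ≥0∞) : ∫⁻ t in Ioi (0 : ℝ), G t / ENNReal.ofReal t = ∫⁻ t, G t ∂ν := by
    rw [lintegral_withDensity_eq_lintegral_mul_non_measurable _ (by fun_prop)]
    · simp only [Pi.mul_apply, div_eq_mul_inv, mul_comm]
    · filter_upwards [ae_restrict_mem measurableSet_Ioi] with t ht
      simpa using ht
  simp only [haarNorm_of_ne_top hq_top, haarNorm_of_ne_top hq₁_top, haarNorm_of_ne_top hq₂_top,
    hν, ← one_div]
  exact ENNReal.lintegral_Lp_mul_le_Lq_mul_Lr hr hr_lt (by simpa only [one_div]) ν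
    hF₁.aemeasurable hF₂.aemeasurable

theorem haarNorm_mul_le (hF₁ : Measurable F₁) (hF₂ : Measurable F₂) (hq₁ : q₁ ≠ 0) (hq₂ : q₂ ≠ 0)
    (hq : 1 / q = 1 / q₁ + 1 / q₂) :
    haarNorm (fun t => F₁ t * F₂ t) q ≤ haarNorm F₁ q₁ * haarNorm F₂ q₂ := by
  have hq₀ : q ≠ 0 := ENNReal.ne_zero_of_one_div_eq_add hq₁ hq₂ hq
  rcases eq_or_ne q₁ ∞ with rfl | hq₁_top
  · obtain rfl : q = q₂ := by simpa using hq
    rw [haarNorm_top]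
    exact haarNorm_mul_le_iSup_mul hF₂ hq₀
  rcases eq_or_ne q₂ ∞ with rfl | hq₂_top
  · obtain rfl : q = q₁ := by simpa using hq
    simp only [mul_comm (F₁ _), mul_comm (haarNorm F₁ q), haarNorm_top]
    exact haarNorm_mul_le_iSup_mul hF₁ hq₀
  exact haarNorm_mul_le_of_ne_top hF₁ hF₂ hq₁ hq₂ hq₁_top hq₂_top hq

end HaarNorm

theorem rpow_mul_decRearr_mul_le {α : Type*} [MeasurableSpace α] (μ : Measure α) (f g : α → ℝ)
    (a b : ℝ) {t : ℝ} (ht : 0 < t) :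
    ENNReal.ofReal (t ^ (a + b)) * decRearr μ (fun x => f x * g x) t ≤
      ENNReal.ofReal (2 ^ (a + b)) * ((ENNReal.ofReal ((t / 2) ^ a) * decRearr μ f (t / 2)) *
        (ENNReal.ofReal ((t / 2) ^ b) * decRearr μ g (t / 2))) := by
  have ht2 : 0 < t / 2 := half_pos ht
  have hpow : t ^ (a + b) = 2 ^ (a + b) * ((t / 2) ^ a * (t / 2) ^ b) := by
    rw [← Real.rpow_add ht2, ← Real.mul_rpow zero_le_two ht2.le, mul_div_cancel₀ t two_ne_zero]
  have hdec := decRearr_mul_le μ f g ht2.le ht2.le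
  rw [add_halves] at hdec
  calc ENNReal.ofReal (t ^ (a + b)) * decRearr μ (fun x => f x * g x) t
      ≤ ENNReal.ofReal (2 ^ (a + b) * ((t / 2) ^ a * (t / 2) ^ b)) *
          (decRearr μ f (t / 2) * decRearr μ g (t / 2)) := by
        rw [← hpow]
        gcongr
    _ = _ := by
        rw [ENNReal.ofReal_mul (by positivity), ENNReal.ofReal_mul (by positivity)]
        ring

theorem oneil_inequality_general (p p₁ p₂ q q₁ q₂ : ℝ≥0∞)
    (hp1 : 1 ≤ p₁) (hp2 : 1 ≤ p₂)
    (hq1 : 1 ≤ q₁) (hq2 : 1 ≤ q₂)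
    (hpe : 1 / p = 1 / p₁ + 1 / p₂) (hqe : 1 / q = 1 / q₁ + 1 / q₂) :
    ∃ C : ℝ, 0 < C ∧
      ∀ (α : Type) [MeasurableSpace α] (μ : Measure α) [SigmaFinite μ],
        ∀ f g : α → ℝ, Measurable f → Measurable g →
          lorentzNorm μ (fun x => f x * g x) p q ≤
            ENNReal.ofReal C * lorentzNorm μ f p₁ q₁ * lorentzNorm μ g p₂ q₂ := by
  refine ⟨2 ^ p.toReal⁻¹, by positivity, fun α _ μ _ f g _ _ => ?_⟩
  have hq₁ : q₁ ≠ 0 := (zero_lt_one.trans_le hq1).ne'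
  have hq₂ : q₂ ≠ 0 := (zero_lt_one.trans_le hq2).ne'
  have hF₁ : Measurable fun t : ℝ => ENNReal.ofReal (t ^ p₁.toReal⁻¹) * decRearr μ f t := by
    fun_prop
  have hF₂ : Measurable fun t : ℝ => ENNReal.ofReal (t ^ p₂.toReal⁻¹) * decRearr μ g t := by
    fun_prop
  set F₁ := fun t : ℝ => ENNReal.ofReal (t ^ p₁.toReal⁻¹) * decRearr μ f t
  set F₂ := fun t : ℝ => ENNReal.ofReal (t ^ p₂.toReal⁻¹) * decRearr μ g t
  have hpointwise (t : ℝ) (ht : t ∈ Ioi 0) :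
      ENNReal.ofReal (t ^ p.toReal⁻¹) * decRearr μ (fun x => f x * g x) t ≤
        ENNReal.ofReal (2 ^ p.toReal⁻¹) * (F₁ (t / 2) * F₂ (t / 2)) := by
    rw [ENNReal.toReal_inv_eq_add (zero_lt_one.trans_le hp1).ne' (zero_lt_one.trans_le hp2).ne' hpe]
    exact rpow_mul_decRearr_mul_le μ f g _ _ ht
  calc lorentzNorm μ (fun x => f x * g x) p q
      ≤ haarNorm (fun t => ENNReal.ofReal (2 ^ p.toReal⁻¹) * (F₁ (t / 2) * F₂ (t / 2))) q :=
        (lorentzNorm_eq_haarNorm ..).trans_le (haarNorm_mono hpointwise q)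
    _ = ENNReal.ofReal (2 ^ p.toReal⁻¹) * haarNorm (fun t => F₁ t * F₂ t) q := by
        rw [haarNorm_const_mul _ (by fun_prop) (ENNReal.ne_zero_of_one_div_eq_add hq₁ hq₂ hqe),
          haarNorm_comp_div (fun t => F₁ t * F₂ t) two_pos]
    _ ≤ ENNReal.ofReal (2 ^ p.toReal⁻¹) * (lorentzNorm μ f p₁ q₁ * lorentzNorm μ g p₂ q₂) := by
        simp only [lorentzNorm_eq_haarNorm]
        gcongr
        exact haarNorm_mul_le hF₁ hF₂ hq₁ hq₂ hqe
    _ = _ := (mul_assoc _ _ _).symm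

/-- O'Neil's inequality: if `1/p = 1/p₁ + 1/p₂` and `1/q = 1/q₁ + 1/q₂` with all exponents in
`[1,∞]`, then on any σ-finite measure space, `‖fg‖_{L^{p,q}} ≤ C ‖f‖_{L^{p₁,q₁}} ‖g‖_{L^{p₂,q₂}}`. -/
theorem oneil_inequality (p p₁ p₂ q q₁ q₂ : ℝ≥0∞)
    (hp : 1 ≤ p) (hp1 : 1 ≤ p₁) (hp2 : 1 ≤ p₂)
    (hq : 1 ≤ q) (hq1 : 1 ≤ q₁) (hq2 : 1 ≤ q₂)
    (hpe : 1 / p = 1 / p₁ + 1 / p₂) (hqe : 1 / q = 1 / q₁ + 1 / q₂) :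
    ∃ C : ℝ, 0 < C ∧
      ∀ (α : Type) [MeasurableSpace α] (μ : Measure α) [SigmaFinite μ],
        ∀ f g : α → ℝ, Measurable f → Measurable g →
          lorentzNorm μ (fun x => f x * g x) p q ≤
            ENNReal.ofReal C * lorentzNorm μ f p₁ q₁ * lorentzNorm μ g p₂ q₂ :=
  oneil_inequality_general p p₁ p₂ q q₁ q₂ hp1 hp2 hq1 hq2 hpe hqe
end
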